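/- Let r : ℤ → ℝ be strictly increasing, Z the swapping ring of (ℤ, r), Q its fraction field, and {·,·} a swapping bracket on Q. For m ∈ ℤ set β_m := (x_{m−1,m+1}/x_{m−1,m})·(x_{m+2,m}/x_{m+2,m+1}) ∈ Q. Then for all j, k ∈ ℤ with |j − k| ≥ 3 one has {β_j, β_k} = 0. -/
import Mathlib


noncomputable section

/-- The linking number `J(r,x,s,y)` of two pairs of points on the (cut) circle. -/
def linkJ (r x s y : ℝ) : ℝ :=
  (1 / 2) * (Real.sign (r - x) * Real.sign (r - y) * Real.sign (y - x)
    - Real.sign (r - x) * Real.sign (r - s) * Real.sign (s - x))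

/-- The swapping ring `Z` of `(ℤ, r)`: the quotient of `ℝ[x_{ab} : (a,b) ∈ ℤ × ℤ]`
by the ideal generated by the variables `x_{aa}`, presented canonically as the
polynomial ring on the off-diagonal generators `x_{ab}`, `a ≠ b`. -/
abbrev SwapRingZ : Type := MvPolynomial {p : ℤ × ℤ // p.1 ≠ p.2} ℝ

/-- `Q`, the fraction field of the swapping ring. -/
abbrev SwapFieldZ : Type := FractionRing SwapRingZ

/-- The generator `x_{a,b}` viewed inside the fraction field `Q`
(it is `0` when `a = b`, reflecting the relation `x_{aa} = 0`). -/
def xg (a b : ℤ) : SwapFieldZ :=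
  if h : a = b then 0
  else algebraMap SwapRingZ SwapFieldZ (MvPolynomial.X ⟨(a, b), h⟩)

lemma xg_ne_zero {a b : ℤ} (h : a ≠ b) : xg a b ≠ 0 := by
  rw [xg, dif_neg h]
  intro hz
  have h0 : (MvPolynomial.X ⟨(a, b), h⟩ : SwapRingZ) = 0 :=
    IsFractionRing.injective SwapRingZ SwapFieldZ (by rw [map_zero]; exact hz)
  exact MvPolynomial.X_ne_zero _ h0

lemma linkJ_sep {a b c d : ℝ} (h1 : a < c) (h2 : a < d) (h3 : b < c) (h4 : b < d) :
    linkJ a b c d = 0 := by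
  unfold linkJ
  rw [Real.sign_of_neg (by linarith : a - d < 0), Real.sign_of_neg (by linarith : a - c < 0),
      Real.sign_of_pos (by linarith : (0:ℝ) < d - b), Real.sign_of_pos (by linarith : (0:ℝ) < c - b)]
  ring

lemma linkJ_shared {t x y : ℝ} (h1 : x < t) (h2 : t < y) : linkJ t x t y = -(1/2) := by
  unfold linkJ
  rw [sub_self, Real.sign_zero, Real.sign_of_pos (by linarith : (0:ℝ) < t - x),
      Real.sign_of_neg (by linarith : t - y < 0), Real.sign_of_pos (by linarith : (0:ℝ) < y - x)]
  ring

/-- For a swapping bracket `{·,·}` on the fraction field `Q` of the swapping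
ring of `(ℤ, r)` with `r` strictly increasing, setting
`β_m := (x_{m−1,m+1}/x_{m−1,m})·(x_{m+2,m}/x_{m+2,m+1})`, the bracket
`{β_j, β_k}` vanishes whenever `|j − k| ≥ 3`. -/
theorem swapping_bracket_distant_cross_ratios_vanish (r : ℤ → ℝ) (hr : StrictMono r)
    (br : SwapFieldZ → SwapFieldZ → SwapFieldZ)
    -- `{·,·}` is ℝ-bilinear, antisymmetric, and a derivation in each argument
    (h_add : ∀ x y z : SwapFieldZ, br (x + y) z = br x z + br y z)
    (h_smul : ∀ (c : ℝ) (x y : SwapFieldZ), br (c • x) y = c • br x y)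
    (h_anti : ∀ x y : SwapFieldZ, br x y = - br y x)
    (h_leib : ∀ x y z : SwapFieldZ, br (x * y) z = x * br y z + y * br x z)
    -- values on the generators
    (h_gen : ∀ a b c d : ℤ,
      br (xg a b) (xg c d) =
        linkJ (r a) (r b) (r c) (r d) • (xg a d * xg c b)) :
    ∀ j k : ℤ, 3 ≤ |j - k| →
      br (xg (j - 1) (j + 1) / xg (j - 1) j * (xg (j + 2) j / xg (j + 2) (j + 1)))
         (xg (k - 1) (k + 1) / xg (k - 1) k * (xg (k + 2) k / xg (k + 2) (k + 1))) = 0 := by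
  -- Leibniz rule in the second argument
  have h_leib' : ∀ x y z : SwapFieldZ, br z (x * y) = x * br z y + y * br z x := by
    intro x y z
    rw [h_anti, h_leib, h_anti y z, h_anti x z]
    ring
  -- quotient rule with common scaling factor
  have hqc : ∀ (u x y : SwapFieldZ) (c : ℝ), y ≠ 0 →
      br u x = c • (x * u) → br u y = c • (y * u) → br u (x / y) = 0 := by
    intro u x y c hy hx hyy
    have h1 : x / y * y = x := div_mul_cancel₀ x hy
    have h2 := h_leib' (x / y) y u
    rw [h1, hx, hyy] at h2
    have h3 : x / y * (c • (y * u)) = c • (x * u) := by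
      rw [mul_smul_comm, ← mul_assoc, div_mul_cancel₀ x hy]
    rw [h3] at h2
    have h4 : y * br u (x / y) = 0 := left_eq_add.mp h2
    rcases mul_eq_zero.mp h4 with h | h
    · exact absurd h hy
    · exact h
  -- quotient rule, both brackets vanishing
  have hq : ∀ u x y : SwapFieldZ, y ≠ 0 → br u x = 0 → br u y = 0 → br u (x / y) = 0 := by
    intro u x y hy hx hyy
    exact hqc u x y 0 hy (by rw [hx, zero_smul]) (by rw [hyy, zero_smul])
  -- product rule, both brackets vanishing (second argument)
  have hp : ∀ u x y : SwapFieldZ, br u x = 0 → br u y = 0 → br u (x * y) = 0 := by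
    intro u x y hx hy
    rw [h_leib', hx, hy, mul_zero, mul_zero, add_zero]
  -- left versions
  have hQ : ∀ x y u : SwapFieldZ, y ≠ 0 → br x u = 0 → br y u = 0 → br (x / y) u = 0 := by
    intro x y u hy hx hyy
    rw [h_anti]
    rw [hq u x y hy (by rw [h_anti, hx, neg_zero]) (by rw [h_anti, hyy, neg_zero]), neg_zero]
  have hL : ∀ x y u : SwapFieldZ, br x u = 0 → br y u = 0 → br (x * y) u = 0 := by
    intro x y u hx hy
    rw [h_leib, hx, hy, mul_zero, mul_zero, add_zero]
  -- separation at the level of generators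
  have hgen0 : ∀ a b c d : ℤ, a < c → a < d → b < c → b < d →
      br (xg a b) (xg c d) = 0 := by
    intro a b c d h1 h2 h3 h4
    rw [h_gen, linkJ_sep (hr h1) (hr h2) (hr h3) (hr h4), zero_smul]
  -- shared first index
  have hgenS : ∀ p b d : ℤ, b < p → p < d →
      br (xg p b) (xg p d) = (-(1/2) : ℝ) • (xg p d * xg p b) := by
    intro p b d hb hd
    rw [h_gen, linkJ_shared (hr hb) (hr hd)]
  have hkey : ∀ p b d d' : ℤ, b < p → p < d → p < d' →
      br (xg p b) (xg p d / xg p d') = 0 := by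
    intro p b d d' hb hd hd'
    exact hqc _ _ _ (-(1/2)) (xg_ne_zero (by omega)) (hgenS p b d hb hd) (hgenS p b d' hb hd')
  -- main one-sided statement
  suffices H : ∀ j k : ℤ, j + 3 ≤ k →
      br (xg (j - 1) (j + 1) / xg (j - 1) j * (xg (j + 2) j / xg (j + 2) (j + 1)))
         (xg (k - 1) (k + 1) / xg (k - 1) k * (xg (k + 2) k / xg (k + 2) (k + 1))) = 0 by
    intro j k habs
    have : j + 3 ≤ k ∨ k + 3 ≤ j := by rcases abs_cases (j - k) with ⟨h1, h2⟩ | ⟨h1, h2⟩ <;> omega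
    rcases this with h | h
    · exact H j k h
    · rw [h_anti, H k j h, neg_zero]
  intro j k hjk
  -- bracket of a generator of β_j with the first quotient of β_k
  have step1 : ∀ a b : ℤ, a ≤ j + 2 → b < j + 2 → (a < k - 1 ∨ a = j + 2) →
      br (xg a b) (xg (k - 1) (k + 1) / xg (k - 1) k) = 0 := by
    intro a b ha hb hc
    rcases hc with h | h
    · exact hq _ _ _ (xg_ne_zero (by omega))
        (hgen0 a b (k - 1) (k + 1) h (by omega) (by omega) (by omega))
        (hgen0 a b (k - 1) k h (by omega) (by omega) (by omega))
    · rcases eq_or_lt_of_le (by omega : j + 2 ≤ k - 1) with he | hlt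
      · subst h
        rw [← he]
        exact hkey (j + 2) b (k + 1) k hb (by omega) (by omega)
      · exact hq _ _ _ (xg_ne_zero (by omega))
          (hgen0 a b (k - 1) (k + 1) (by omega) (by omega) (by omega) (by omega))
          (hgen0 a b (k - 1) k (by omega) (by omega) (by omega) (by omega))
  -- bracket of a generator of β_j with the second quotient of β_k
  have step2 : ∀ a b : ℤ, a ≤ j + 2 → b ≤ j + 2 →
      br (xg a b) (xg (k + 2) k / xg (k + 2) (k + 1)) = 0 := by
    intro a b ha hb
    exact hq _ _ _ (xg_ne_zero (by omega))
      (hgen0 a b (k + 2) k (by omega) (by omega) (by omega) (by omega))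
      (hgen0 a b (k + 2) (k + 1) (by omega) (by omega) (by omega) (by omega))
  -- bracket of a generator of β_j with all of β_k
  have stepβ : ∀ a b : ℤ, a ≤ j + 2 → b < j + 2 → (a < k - 1 ∨ a = j + 2) →
      br (xg a b)
        (xg (k - 1) (k + 1) / xg (k - 1) k * (xg (k + 2) k / xg (k + 2) (k + 1))) = 0 := by
    intro a b ha hb hc
    exact hp _ _ _ (step1 a b ha hb hc) (step2 a b ha (by omega))
  apply hL
  · apply hQ _ _ _ (xg_ne_zero (by omega : (j : ℤ) - 1 ≠ j))
    · exact stepβ (j - 1) (j + 1) (by omega) (by omega) (Or.inl (by omega))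
    · exact stepβ (j - 1) j (by omega) (by omega) (Or.inl (by omega))
  · apply hQ _ _ _ (xg_ne_zero (by omega : (j : ℤ) + 2 ≠ j + 1))
    · exact stepβ (j + 2) j (by omega) (by omega) (Or.inr rfl)
    · exact stepβ (j + 2) (j + 1) (by omega) (by omega) (Or.inr rfl)
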